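/- arXiv:1805.02594 — 10 statements merged into one kernel-verified Lean document; each statement's English description precedes it below -/
import Mathlib

section
/- Let 𝓔 be an involutive family of binary relations on E (i.e. r ∈ 𝓔 implies r⁻¹ ∈ 𝓔). Then for every subset A of E, the diameter set δ(A) := {r ∈ 𝓔 : A × A ⊆ r} equals δ(Cov(A)), where Cov(A) is the intersection of all balls containing A. -/
open Set

variable {E : Type*}

def ball (r : Set (E × E)) (x : E) : Set E := {y | (x, y) ∈ r}

def relInv (r : Set (E × E)) : Set (E × E) := {p | (p.2, p.1) ∈ r}

def center (A : Set E) (r : Set (E × E)) : Set E := {x | A ⊆ ball r x}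

def ballsOf (𝓔 : Set (Set (E × E))) (G : Set E) : Set (Set E) :=
  {B | ∃ x ∈ G, ∃ r ∈ 𝓔, B = ball r x}

def interB (G : Set E) (𝓔 : Set (Set (E × E))) : Set (Set E) :=
  {B | ∃ S, S ⊆ ballsOf 𝓔 G ∧ B = G ∩ ⋂₀ S}

def cov (𝓔 : Set (Set (E × E))) (A : Set E) : Set E :=
  ⋂₀ {B | B ∈ ballsOf 𝓔 univ ∧ A ⊆ B}

def diamSet (𝓔 : Set (Set (E × E))) (A : Set E) : Set (Set (E × E)) :=
  {r | r ∈ 𝓔 ∧ A ×ˢ A ⊆ r}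

def radSet (𝓔 : Set (Set (E × E))) (A : Set E) : Set (Set (E × E)) :=
  {r | r ∈ 𝓔 ∧ ∃ x ∈ A, A ⊆ ball r x}

def hasFIP (𝓒 : Set (Set E)) : Prop :=
  ∀ 𝓕, 𝓕 ⊆ 𝓒 → (∀ G, G ⊆ 𝓕 → G.Finite → (⋂₀ G).Nonempty) → (⋂₀ 𝓕).Nonempty

def isInvolutive (𝓔 : Set (Set (E × E))) : Prop := ∀ r ∈ 𝓔, relInv r ∈ 𝓔

def isReflexive (𝓔 : Set (Set (E × E))) : Prop := ∀ r ∈ 𝓔, ∀ x : E, (x, x) ∈ r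

def isEndo (𝓔 : Set (Set (E × E))) (f : E → E) : Prop :=
  ∀ r ∈ 𝓔, ∀ x y : E, (x, y) ∈ r → (f x, f y) ∈ r

def olr (𝓔 : Set (Set (E × E))) (A B : Set E) : Prop :=
  ∀ x ∈ B, ∃ h : E → E, (∀ a ∈ A, h a = a) ∧ h x ∈ A ∧
    ∀ r ∈ 𝓔, ∀ u ∈ insert x A, ∀ v ∈ insert x A, (u, v) ∈ r → (h u, h v) ∈ r

def normalS (G : Set E) (𝓡 : Set (Set (E × E))) : Prop :=
  ∀ A ∈ interB G 𝓡, A.Nonempty → radSet 𝓡 A = diamSet 𝓡 A → ∃ a : E, A = {a}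

def restrRel (X : Set E) (𝓔 : Set (Set (E × E))) : Set (Set (E × E)) :=
  (fun r => r ∩ X ×ˢ X) '' 𝓔

theorem subset_cov (𝓔 : Set (Set (E × E))) (A : Set E) : A ⊆ cov 𝓔 A :=
  fun _ ha _ hB => hB.2 ha

theorem cov_subset_ball {𝓔 : Set (Set (E × E))} {A : Set E} {r : Set (E × E)} {x : E}
    (hr : r ∈ 𝓔) (hA : A ⊆ ball r x) : cov 𝓔 A ⊆ ball r x :=
  fun _ hz => hz (ball r x) ⟨⟨x, mem_univ x, r, hr, rfl⟩, hA⟩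

theorem diamSet_anti (𝓔 : Set (Set (E × E))) {A B : Set E} (hAB : A ⊆ B) :
    diamSet 𝓔 B ⊆ diamSet 𝓔 A :=
  fun _ ⟨hr, hB⟩ => ⟨hr, (prod_mono hAB hAB).trans hB⟩

theorem diamSet_subset_diamSet_cov {𝓔 : Set (Set (E × E))} (hinv : isInvolutive 𝓔)
    (A : Set E) : diamSet 𝓔 A ⊆ diamSet 𝓔 (cov 𝓔 A) := by
  rintro r ⟨hr, hAA⟩
  refine ⟨hr, ?_⟩
  rintro ⟨x, y⟩ ⟨hx, hy⟩
  have hcov_ball : ∀ a ∈ A, cov 𝓔 A ⊆ ball r a :=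
    fun a ha => cov_subset_ball hr fun b hb => hAA ⟨ha, hb⟩
  -- `y ∈ ball r a` is definitionally `a ∈ ball (relInv r) y`.
  have hA_ball_inv : A ⊆ ball (relInv r) y := fun a ha => hcov_ball a ha hy
  exact cov_subset_ball (hinv r hr) hA_ball_inv hx

theorem diamSet_cov (𝓔 : Set (Set (E × E))) (hinv : isInvolutive 𝓔) (A : Set E) :
    diamSet 𝓔 A = diamSet 𝓔 (cov 𝓔 A) :=
  (diamSet_subset_diamSet_cov hinv A).antisymm (diamSet_anti 𝓔 (subset_cov 𝓔 A))
end

section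
/- For a family 𝓔 of binary relations on E, the collection of balls 𝓑 := {B(x,r) : x ∈ E, r ∈ 𝓔} has the finite intersection property if and only if the collection of all (arbitrary) intersections of balls has the finite intersection property. -/
open Set

variable {E : Type*}

def IsCentered (𝓕 : Set (Set E)) : Prop :=
  ∀ G, G ⊆ 𝓕 → G.Finite → (⋂₀ G).Nonempty

theorem IsCentered.of_forall_exists_subset {𝓕 𝓖 : Set (Set E)} (h𝓕 : IsCentered 𝓕)
    (hrefine : ∀ B ∈ 𝓖, ∃ F ∈ 𝓕, F ⊆ B) : IsCentered 𝓖 := by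
  choose! f hf𝓕 hfB using hrefine
  intro G hG hGfin
  obtain ⟨x, hx⟩ := h𝓕 (f '' G) (image_subset_iff.2 fun B hB => hf𝓕 B (hG hB)) (hGfin.image f)
  exact ⟨x, fun B hB => hfB B (hG hB) (hx _ (mem_image_of_mem f hB))⟩

theorem hasFIP.anti {𝓒 𝓓 : Set (Set E)} (hsub : 𝓒 ⊆ 𝓓) (h𝓓 : hasFIP 𝓓) : hasFIP 𝓒 :=
  fun 𝓕 h𝓕 => h𝓓 𝓕 (h𝓕.trans hsub)

theorem subset_sInter_closure (𝓒 : Set (Set E)) : 𝓒 ⊆ {B | ∃ S, S ⊆ 𝓒 ∧ B = ⋂₀ S} :=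
  fun B hB => ⟨{B}, singleton_subset_iff.2 hB, (sInter_singleton B).symm⟩

theorem hasFIP.sInter_closure {𝓒 : Set (Set E)} (h : hasFIP 𝓒) :
    hasFIP {B | ∃ S, S ⊆ 𝓒 ∧ B = ⋂₀ S} := by
  intro 𝓕 h𝓕 hcentered
  have h𝓕 : ∀ F ∈ 𝓕, ∃ S, S ⊆ 𝓒 ∧ F = ⋂₀ S := h𝓕
  choose! S hS𝓒 hS_sInter using h𝓕
  -- Replace each member of 𝓕 by the sets it is the intersection of: same total intersection.
  have hrefine : ∀ B ∈ ⋃ F ∈ 𝓕, S F, ∃ F ∈ 𝓕, F ⊆ B := by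
    intro B hB
    obtain ⟨F, hF, hB⟩ := mem_iUnion₂.1 hB
    exact ⟨F, hF, hS_sInter F hF ▸ sInter_subset_of_mem hB⟩
  obtain ⟨x, hx⟩ := h _ (iUnion₂_subset hS𝓒)
    (IsCentered.of_forall_exists_subset hcentered hrefine)
  refine ⟨x, fun F hF => ?_⟩
  rw [hS_sInter F hF]
  exact fun B hB => hx B (mem_iUnion₂.2 ⟨F, hF, hB⟩)

theorem fip_balls_iff_fip_interBalls (𝓔 : Set (Set (E × E))) :
    hasFIP (ballsOf 𝓔 univ) ↔ hasFIP {B | ∃ S, S ⊆ ballsOf 𝓔 univ ∧ B = ⋂₀ S} :=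
  ⟨hasFIP.sInter_closure, hasFIP.anti (subset_sInter_closure _)⟩
end

section
/- Let f be an endomorphism of an involutive binary relational system (E,𝓔) and let A be a nonempty intersection of balls that is preserved by f (f(A) ⊆ A) and minimal (with respect to inclusion) among nonempty intersections of balls preserved by f. Then A is equally centered, i.e. the radius set r(A) := {r ∈ 𝓔 : ∃x ∈ A, A ⊆ B(x,r)} equals the diameter set δ(A) := {r ∈ 𝓔 : A × A ⊆ r}. -/
open Set

variable {E : Type*}

/-! If `r` is a radius of `A`, witnessed by a center `x ∈ A`, then the set `C` of all centers of
radius `r` lying in `A` is again an intersection of balls (of the inverse relation `r⁻¹`, centred at the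
points of `A`), it contains `x`, and it is `f`-invariant: for a center `y`, the intersection of balls
`A ∩ B(f y, r)` contains `f(A)` because `f` maps `(y, a) ∈ r` to `(f y, f a) ∈ r`, so by minimality it is
all of `A`, i.e. `f y` is again a center. Minimality then forces `C = A`, so every point of `A` is a
center of radius `r`, which says `A × A ⊆ r`. -/

lemma inter_sInter_mem_interB {𝓔 : Set (Set (E × E))} {G A : Set E} (hA : A ∈ interB G 𝓔)
    {T : Set (Set E)} (hT : T ⊆ ballsOf 𝓔 G) : A ∩ ⋂₀ T ∈ interB G 𝓔 := by
  obtain ⟨S, hS, rfl⟩ := hA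
  exact ⟨S ∪ T, union_subset hS hT, by rw [sInter_union, inter_assoc]⟩

lemma inter_ball_mem_interB {𝓔 : Set (Set (E × E))} {G A : Set E} (hA : A ∈ interB G 𝓔)
    {r : Set (E × E)} (hr : r ∈ 𝓔) {x : E} (hx : x ∈ G) : A ∩ ball r x ∈ interB G 𝓔 := by
  simpa only [sInter_singleton] using
    inter_sInter_mem_interB hA (singleton_subset_iff.2 ⟨x, hx, r, hr, rfl⟩)

lemma center_eq_sInter (A : Set E) (r : Set (E × E)) :
    center A r = ⋂₀ ((ball (relInv r)) '' A) := by
  ext x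
  simp [_root_.center, ball, relInv, subset_def]

lemma inter_center_mem_interB {𝓔 : Set (Set (E × E))} (hinv : isInvolutive 𝓔) {A : Set E}
    (hA : A ∈ interB univ 𝓔) {r : Set (E × E)} (hr : r ∈ 𝓔) :
    A ∩ center A r ∈ interB univ 𝓔 := by
  rw [center_eq_sInter]
  refine inter_sInter_mem_interB hA ?_
  rintro _ ⟨a, -, rfl⟩
  exact ⟨a, mem_univ a, relInv r, hinv r hr, rfl⟩

lemma diamSet_subset_radSet (𝓔 : Set (Set (E × E))) {A : Set E} (hne : A.Nonempty) :
    diamSet 𝓔 A ⊆ radSet 𝓔 A := by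
  rintro r ⟨hr, hAA⟩
  obtain ⟨x, hx⟩ := hne
  exact ⟨hr, x, hx, fun a ha => hAA (mk_mem_prod hx ha)⟩

section Minimal

variable {𝓔 : Set (Set (E × E))} {f : E → E} {A : Set E}
  (hmin : ∀ A' ∈ interB univ 𝓔, A'.Nonempty → MapsTo f A' A' → A' ⊆ A → A' = A)
include hmin

lemma eq_of_image_subset_of_minimal (hne : A.Nonempty) {A' : Set E} (hA' : A' ∈ interB univ 𝓔)
    (himage : f '' A ⊆ A') (hsub : A' ⊆ A) : A' = A :=
  hmin A' hA' ((hne.image f).mono himage)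
    (fun _ hz => himage (mem_image_of_mem f (hsub hz))) hsub

lemma mapsTo_inter_center_of_minimal (hf : isEndo 𝓔 f) (hA : A ∈ interB univ 𝓔)
    (hpres : MapsTo f A A) {r : Set (E × E)} (hr : r ∈ 𝓔) :
    MapsTo f (A ∩ center A r) (A ∩ center A r) := by
  rintro y ⟨hyA, hy⟩
  have himage : f '' A ⊆ A ∩ ball r (f y) := by
    rintro _ ⟨a, ha, rfl⟩
    exact ⟨hpres ha, hf r hr y a (hy ha)⟩
  have hball : A ∩ ball r (f y) = A :=
    eq_of_image_subset_of_minimal hmin ⟨y, hyA⟩ (inter_ball_mem_interB hA hr (mem_univ (f y))) himage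
      inter_subset_left
  exact ⟨hpres hyA, inter_eq_left.1 hball⟩

lemma radSet_subset_diamSet_of_minimal (hinv : isInvolutive 𝓔) (hf : isEndo 𝓔 f)
    (hA : A ∈ interB univ 𝓔) (hpres : MapsTo f A A) : radSet 𝓔 A ⊆ diamSet 𝓔 A := by
  rintro r ⟨hr, x, hxA, hx⟩
  have hcenters : A ∩ center A r = A :=
    hmin _ (inter_center_mem_interB hinv hA hr) ⟨x, hxA, hx⟩
      (mapsTo_inter_center_of_minimal hmin hf hA hpres hr) inter_subset_left
  refine ⟨hr, fun ⟨u, v⟩ ⟨hu, hv⟩ => ?_⟩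
  exact (inter_eq_left.1 hcenters hu : A ⊆ ball r u) hv

end Minimal

theorem minimal_invariant_is_equally_centered (𝓔 : Set (Set (E × E)))
    (hinv : isInvolutive 𝓔) (f : E → E) (hf : isEndo 𝓔 f)
    (A : Set E) (hA : A ∈ interB univ 𝓔) (hne : A.Nonempty) (hpres : MapsTo f A A)
    (hmin : ∀ A' ∈ interB univ 𝓔, A'.Nonempty → MapsTo f A' A' → A' ⊆ A → A' = A) :
    radSet 𝓔 A = diamSet 𝓔 A :=
  (radSet_subset_diamSet_of_minimal hmin hinv hf hA hpres).antisymm (diamSet_subset_radSet 𝓔 hne)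
end

section
/- If a binary relational system (E,𝓔) has a compact structure (the balls have the finite intersection property), then for every endomorphism f, every nonempty intersection of balls preserved by f contains a minimal (by inclusion) nonempty intersection of balls preserved by f. -/
/-! By Zorn's lemma it suffices that a nonempty chain of nonempty `f`-invariant intersections of
balls has a lower bound of the same kind. Its intersection is again an intersection of balls and
is `f`-invariant; it is nonempty by compactness, because finitely many of the balls involved each
contain a member of the chain, hence all contain the smallest of these members. -/

open Set

variable {E : Type*}

theorem mem_interB_univ_iff {𝓔 : Set (Set (E × E))} {A : Set E} :
    A ∈ interB univ 𝓔 ↔ ∃ S ⊆ ballsOf 𝓔 univ, A = ⋂₀ S := by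
  simp only [interB, univ_inter, mem_ofPred_eq]

theorem exists_sInter_eq_sInter_of_forall {𝓒 c : Set (Set E)}
    (hc : ∀ X ∈ c, ∃ S ⊆ 𝓒, X = ⋂₀ S) :
    ∃ T ⊆ 𝓒, ⋂₀ c = ⋂₀ T ∧ ∀ B ∈ T, ∃ X ∈ c, X ⊆ B := by
  choose S hS𝓒 hSeq using hc
  refine ⟨⋃ X : c, S X X.2, iUnion_subset fun X => hS𝓒 X X.2, ?_, ?_⟩
  · rw [sInter_iUnion, sInter_eq_iInter]
    exact iInter_congr fun X => hSeq X X.2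
  · simp only [mem_iUnion]
    rintro B ⟨X, hB⟩
    exact ⟨X, X.2, (hSeq X X.2).trans_subset (sInter_subset_of_mem hB)⟩

theorem sInter_mem_interB_univ {𝓔 : Set (Set (E × E))} {c : Set (Set E)}
    (hc : c ⊆ interB univ 𝓔) : ⋂₀ c ∈ interB univ 𝓔 := by
  obtain ⟨T, hT, hcT, -⟩ :=
    exists_sInter_eq_sInter_of_forall fun X hX => mem_interB_univ_iff.1 (hc hX)
  exact mem_interB_univ_iff.2 ⟨T, hT, hcT⟩

theorem IsChain.exists_subset_sInter_of_finite {c G : Set (Set E)}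
    (hchain : IsChain (· ⊆ ·) c) (hcne : c.Nonempty) (hG : G.Finite)
    (hcover : ∀ B ∈ G, ∃ X ∈ c, X ⊆ B) : ∃ X ∈ c, X ⊆ ⋂₀ G := by
  induction G, hG using Set.Finite.induction_on with
  | empty => exact hcne.imp fun X hX => ⟨hX, by simp⟩
  | @insert B G _ _ ih =>
    obtain ⟨X, hXc, hXB⟩ := hcover B (mem_insert B G)
    obtain ⟨Y, hYc, hYG⟩ := ih fun B' hB' => hcover B' (mem_insert_of_mem B hB')
    rw [sInter_insert]
    rcases hchain.total hXc hYc with hXY | hYX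
    · exact ⟨X, hXc, subset_inter hXB (hXY.trans hYG)⟩
    · exact ⟨Y, hYc, subset_inter (hYX.trans hXB) hYG⟩

theorem sInter_nonempty_of_isChain {𝓒 c : Set (Set E)} (h𝓒 : hasFIP 𝓒)
    (hc : ∀ X ∈ c, ∃ S ⊆ 𝓒, X = ⋂₀ S) (hne : ∀ X ∈ c, X.Nonempty)
    (hchain : IsChain (· ⊆ ·) c) (hcne : c.Nonempty) : (⋂₀ c).Nonempty := by
  obtain ⟨T, hT𝓒, hcT, hTc⟩ := exists_sInter_eq_sInter_of_forall hc
  rw [hcT]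
  refine h𝓒 T hT𝓒 fun G hGT hG => ?_
  obtain ⟨X, hXc, hXG⟩ :=
    hchain.exists_subset_sInter_of_finite hcne hG fun B hB => hTc B (hGT hB)
  exact (hne X hXc).mono hXG

theorem exists_minimal_invariant_interBall_general (𝓔 : Set (Set (E × E)))
    (hcpt : hasFIP (ballsOf 𝓔 univ)) (f : E → E)
    (A : Set E) (hA : A ∈ interB univ 𝓔) (hne : A.Nonempty) (hpres : MapsTo f A A) :
    ∃ A' ∈ interB univ 𝓔, A' ⊆ A ∧ A'.Nonempty ∧ MapsTo f A' A' ∧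
      ∀ A'' ∈ interB univ 𝓔, A''.Nonempty → MapsTo f A'' A'' → A'' ⊆ A' → A'' = A' := by
  let 𝓢 : Set (Set E) := {X | X ∈ interB univ 𝓔 ∧ X.Nonempty ∧ MapsTo f X X}
  have hchain_bound : ∀ c ⊆ 𝓢, IsChain (· ⊆ ·) c → c.Nonempty → ∃ L ∈ 𝓢, ∀ X ∈ c, L ⊆ X :=
    fun c hc hchain hcne =>
      ⟨⋂₀ c, ⟨sInter_mem_interB_univ fun X hX => (hc hX).1,
        sInter_nonempty_of_isChain hcpt (fun X hX => mem_interB_univ_iff.1 (hc hX).1)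
          (fun X hX => (hc hX).2.1) hchain hcne,
        fun x hx X hX => (hc hX).2.2 (hx X hX)⟩,
        fun X hX => sInter_subset_of_mem hX⟩
  obtain ⟨M, hMA, hM⟩ := zorn_superset_nonempty 𝓢 hchain_bound A ⟨hA, hne, hpres⟩
  exact ⟨M, hM.prop.1, hMA, hM.prop.2.1, hM.prop.2.2, fun A'' hA'' hne'' hpres'' hA''M =>
    hM.eq_of_subset ⟨hA'', hne'', hpres''⟩ hA''M⟩

theorem exists_minimal_invariant_interBall (𝓔 : Set (Set (E × E)))
    (hcpt : hasFIP (ballsOf 𝓔 univ)) (f : E → E) (hf : isEndo 𝓔 f)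
    (A : Set E) (hA : A ∈ interB univ 𝓔) (hne : A.Nonempty) (hpres : MapsTo f A A) :
    ∃ A' ∈ interB univ 𝓔, A' ⊆ A ∧ A'.Nonempty ∧ MapsTo f A' A' ∧
      ∀ A'' ∈ interB univ 𝓔, A''.Nonempty → MapsTo f A'' A'' → A'' ⊆ A' → A'' = A' :=
  exists_minimal_invariant_interBall_general 𝓔 hcpt f A hA hne hpres
end

section
/- Let (E,𝓔) be a reflexive and involutive binary relational system and A ⊆ E. If for every family of balls with centers in A and radii in 𝓔 whose intersection over E is nonempty the intersection also meets A, then the restriction of (E,𝓔) to A is a one-local retract of (E,𝓔). -/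
open Set

variable {E : Type*}

theorem exists_mem_forall_rel_of_ball_property {𝓔 : Set (Set (E × E))} {A : Set E}
    (hball : ∀ S ⊆ ballsOf 𝓔 A, (⋂₀ S).Nonempty → (A ∩ ⋂₀ S).Nonempty) (x : E) :
    ∃ y ∈ A, ∀ r ∈ 𝓔, ∀ a ∈ A, (a, x) ∈ r → (a, y) ∈ r := by
  let S : Set (Set E) := {B | ∃ a ∈ A, ∃ r ∈ 𝓔, x ∈ ball r a ∧ B = ball r a}
  have hS : S ⊆ ballsOf 𝓔 A := by
    rintro B ⟨a, ha, r, hr, -, rfl⟩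
    exact ⟨a, ha, r, hr, rfl⟩
  have hxS : x ∈ ⋂₀ S := by
    rintro B ⟨a, -, r, -, hxB, rfl⟩
    exact hxB
  obtain ⟨y, hyA, hyS⟩ := hball S hS ⟨x, hxS⟩
  exact ⟨y, hyA, fun r hr a ha hax => hyS _ ⟨a, ha, r, hr, hax, rfl⟩⟩

/-- Involutivity turns the hypothesis on pairs `(a, x)` into one on pairs `(x, a)`; reflexivity
handles `(x, x)`. -/
theorem rel_update_of_forall_rel [DecidableEq E] {𝓔 : Set (Set (E × E))} {A : Set E}
    (hrefl : isReflexive 𝓔) (hinv : isInvolutive 𝓔) {x y : E}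
    (hy : ∀ r ∈ 𝓔, ∀ a ∈ A, (a, x) ∈ r → (a, y) ∈ r) {r : Set (E × E)} (hr : r ∈ 𝓔)
    {u v : E} (hu : u ∈ insert x A) (hv : v ∈ insert x A) (huv : (u, v) ∈ r) :
    (Function.update id x y u, Function.update id x y v) ∈ r := by
  by_cases hux : u = x <;> by_cases hvx : v = x
  · simpa [hux, hvx] using hrefl r hr y
  · have hyv : (y, v) ∈ r := hy (relInv r) (hinv r hr) v (hv.resolve_left hvx) (hux ▸ huv)
    simpa [hux, hvx] using hyv
  · simpa [hux, hvx] using hy r hr u (hu.resolve_left hux) (hvx ▸ huv)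
  · simpa [hux, hvx] using huv

theorem ball_property_implies_olr (𝓔 : Set (Set (E × E))) (A : Set E)
    (hrefl : isReflexive 𝓔) (hinv : isInvolutive 𝓔)
    (hball : ∀ S, S ⊆ {B | ∃ x ∈ A, ∃ r ∈ 𝓔, B = ball r x} →
      (⋂₀ S).Nonempty → (A ∩ ⋂₀ S).Nonempty) :
    olr 𝓔 A univ := by
  classical
  intro x _
  by_cases hxA : x ∈ A
  · exact ⟨id, fun a _ => rfl, hxA, fun r _ u _ v _ huv => huv⟩
  obtain ⟨y, hyA, hy⟩ := exists_mem_forall_rel_of_ball_property hball x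
  refine ⟨Function.update id x y, fun a ha => ?_, by simpa using hyA,
    fun r hr u hu v hv => rel_update_of_forall_rel hrefl hinv hy hr hu hv⟩
  exact Function.update_of_ne (ne_of_mem_of_not_mem ha hxA) y id
end

section
/- One-local retraction is transitive: if A ⊆ B ⊆ E, the restriction of (E,𝓔) to A is a one-local retract of the restriction to B, and the restriction to B is a one-local retract of (E,𝓔), then the restriction to A is a one-local retract of (E,𝓔). -/
/-! Given `x`, let `g` retract `insert x B` onto `B` and `h` retract `insert (g x) A` onto `A`.
Since `g` fixes `A ⊆ B`, it maps `insert x A` into `insert (g x) A`, so `h ∘ g` retracts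
`insert x A` onto `A`. -/


open Set

variable {E : Type*}

def PreservesRelsOn (𝓔 : Set (Set (E × E))) (h : E → E) (S : Set E) : Prop :=
  ∀ r ∈ 𝓔, ∀ u ∈ S, ∀ v ∈ S, (u, v) ∈ r → (h u, h v) ∈ r

namespace PreservesRelsOn

variable {𝓔 : Set (Set (E × E))} {g h : E → E} {S T : Set E}

theorem mono (hT : PreservesRelsOn 𝓔 h T) (hST : S ⊆ T) : PreservesRelsOn 𝓔 h S :=
  fun r hr u hu v hv huv => hT r hr u (hST hu) v (hST hv) huv

theorem comp (hh : PreservesRelsOn 𝓔 h T) (hg : PreservesRelsOn 𝓔 g S) (hgST : MapsTo g S T) :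
    PreservesRelsOn 𝓔 (h ∘ g) S :=
  fun r hr u hu v hv huv => hh r hr (g u) (hgST hu) (g v) (hgST hv) (hg r hr u hu v hv huv)

end PreservesRelsOn

theorem olr_iff {𝓔 : Set (Set (E × E))} {A B : Set E} :
    olr 𝓔 A B ↔ ∀ x ∈ B, ∃ h : E → E, EqOn h id A ∧ h x ∈ A ∧ PreservesRelsOn 𝓔 h (insert x A) :=
  Iff.rfl

theorem mapsTo_insert_of_eqOn_id {g : E → E} {A : Set E} (hg : EqOn g id A) (x : E) :
    MapsTo g (insert x A) (insert (g x) A) :=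
  ((mapsTo_id A).congr hg.symm).insert x

theorem olr_trans (𝓔 : Set (Set (E × E))) (A B : Set E) (hAB : A ⊆ B)
    (h1 : olr 𝓔 A B) (h2 : olr 𝓔 B univ) : olr 𝓔 A univ := by
  rw [olr_iff] at h1 h2 ⊢
  intro x _
  obtain ⟨g, hgB, hgx, hg⟩ := h2 x (mem_univ x)
  obtain ⟨h, hhA, hhx, hh⟩ := h1 (g x) hgx
  have hgA : EqOn g id A := hgB.mono hAB
  refine ⟨h ∘ g, fun a ha => (congrArg h (hgA ha)).trans (hhA ha), hhx, ?_⟩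
  exact hh.comp (hg.mono (insert_subset_insert hAB)) (mapsTo_insert_of_eqOn_id hgA x)
end

section
/- If the restriction of a binary relational system (E,𝓔) to X is a one-local retract and (E,𝓔) has a compact structure (the balls have the finite intersection property), then the restriction to X also has a compact structure. -/
open Set

variable {E : Type*}

/-!
Enlarge each ball of the restriction to the ball of `E` with the same centre and relation: the
enlarged balls still have the finite intersection property, so by compactness of `E` they share a
point `z`, and the one-local retraction at `z` moves `z` into `X` while keeping it in every ball
centred in `X`.
-/

theorem ball_inter_prod_self {r : Set (E × E)} {X : Set E} {x : E} (hx : x ∈ X) :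
    ball (r ∩ X ×ˢ X) x = ball r x ∩ X := by
  ext y
  simp [ball, hx]

theorem mem_ballsOf_restrRel {𝓔 : Set (Set (E × E))} {X B : Set E} :
    B ∈ ballsOf (restrRel X 𝓔) X ↔ ∃ x ∈ X, ∃ r ∈ 𝓔, B = ball r x ∩ X := by
  constructor
  · rintro ⟨x, hx, _, ⟨r, hr, rfl⟩, rfl⟩
    exact ⟨x, hx, r, hr, ball_inter_prod_self hx⟩
  · rintro ⟨x, hx, r, hr, rfl⟩
    exact ⟨x, hx, _, ⟨r, hr, rfl⟩, (ball_inter_prod_self hx).symm⟩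

theorem sInter_nonempty_of_mapsTo {𝓐 𝓑 : Set (Set E)} {f : Set E → Set E}
    (hf : ∀ A, f A ⊆ A) (hmaps : MapsTo f 𝓐 𝓑)
    (h𝓑 : ∀ G ⊆ 𝓑, G.Finite → (⋂₀ G).Nonempty) :
    ∀ G ⊆ 𝓐, G.Finite → (⋂₀ G).Nonempty := by
  intro G hG hGfin
  obtain ⟨y, hy⟩ := h𝓑 (f '' G) (hmaps.mono_left hG).image_subset (hGfin.image f)
  exact ⟨y, fun A hA => hf A (hy _ (mem_image_of_mem f hA))⟩

theorem olr.exists_mem_ball_of_mem_ball {𝓔 : Set (Set (E × E))} {X : Set E}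
    (holr : olr 𝓔 X univ) (z : E) :
    ∃ w ∈ X, ∀ x ∈ X, ∀ r ∈ 𝓔, z ∈ ball r x → w ∈ ball r x := by
  obtain ⟨h, hfix, hzX, hhom⟩ := holr z (mem_univ z)
  refine ⟨h z, hzX, fun x hx r hr hz => ?_⟩
  have := hhom r hr x (mem_insert_of_mem z hx) z (mem_insert z X) hz
  rwa [hfix x hx] at this

theorem olr_compact (𝓔 : Set (Set (E × E))) (X : Set E)
    (holr : olr 𝓔 X univ) (hcpt : hasFIP (ballsOf 𝓔 univ)) :
    hasFIP (ballsOf (restrRel X 𝓔) X) := by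
  intro 𝓕 h𝓕 hfin
  obtain ⟨z, hz⟩ : (⋂₀ {B | B ∈ ballsOf 𝓔 univ ∧ B ∩ X ∈ 𝓕}).Nonempty :=
    hcpt _ (fun _ hB => hB.1) <|
      sInter_nonempty_of_mapsTo (f := (· ∩ X)) (fun _ => inter_subset_left) (fun _ hB => hB.2) hfin
  obtain ⟨w, hwX, hw⟩ := holr.exists_mem_ball_of_mem_ball z
  refine ⟨w, fun B hB => ?_⟩
  obtain ⟨x, hx, r, hr, rfl⟩ := mem_ballsOf_restrRel.mp (h𝓕 hB)
  exact ⟨hw x hx r hr (hz _ ⟨⟨x, mem_univ x, r, hr, rfl⟩, hB⟩), hwX⟩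
end

section
/- In a partially ordered set P, every nonempty down-directed subset has an infimum if and only if every nonempty totally ordered subset (chain) has an infimum. -/
/-!
Induction on the cardinality of the index type of a directed family. A countable directed family
has a coinitial decreasing sequence. An uncountable one, indexed by an initial well-order, is the
increasing union of the closures of the initial segments under a choice of lower bounds of pairs;
these closures are directed and of smaller cardinality, so by induction they have infima, which
form a decreasing chain whose infimum is that of the whole family.
-/

open Cardinal Set

namespace Set

variable {α : Type*} (f : α → α → α)

def image2Closure (s : Set α) : Set α :=
  ⋃ n : ℕ, (fun t => t ∪ image2 f t t)^[n] s

variable {f}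

theorem subset_image2Closure (s : Set α) : s ⊆ image2Closure f s :=
  subset_iUnion (fun n => (fun t => t ∪ image2 f t t)^[n] s) 0

theorem image2Closure_mono : Monotone (image2Closure f) := fun _ _ h =>
  iUnion_mono fun n => Monotone.iterate (fun _ _ h => union_subset_union h (image2_subset h h)) n h

theorem image2_mem_image2Closure {s : Set α} {x y : α} (hx : x ∈ image2Closure f s)
    (hy : y ∈ image2Closure f s) : f x y ∈ image2Closure f s := by
  have hstage : Monotone fun n => (fun t => t ∪ image2 f t t)^[n] s :=
    monotone_nat_of_le_succ fun n => by
      rw [Function.iterate_succ_apply']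
      exact subset_union_left
  obtain ⟨m, hm⟩ := mem_iUnion.1 hx
  obtain ⟨n, hn⟩ := mem_iUnion.1 hy
  refine mem_iUnion.2 ⟨max m n + 1, ?_⟩
  rw [Function.iterate_succ_apply']
  exact Or.inr (mem_image2_of_mem (hstage (le_max_left m n) hm) (hstage (le_max_right m n) hn))

theorem mk_image2Closure_le (s : Set α) : #(image2Closure f s) ≤ max #s ℵ₀ := by
  have hℵ₀ : ℵ₀ ≤ max #s ℵ₀ := le_max_right _ _
  have hstage : ∀ n, #((fun t => t ∪ image2 f t t)^[n] s) ≤ max #s ℵ₀ := by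
    intro n
    induction n with
    | zero => exact le_max_left _ _
    | succ n ih =>
      rw [Function.iterate_succ_apply']
      exact (mk_union_le _ _).trans <| add_le_of_le hℵ₀ ih <|
        mk_image2_le.trans (mul_le_of_le hℵ₀ ih ih)
  have := mk_iUnion_le_lift (fun n : ℕ => (fun t => t ∪ image2 f t t)^[n] s)
  simp only [lift_uzero, mk_nat, lift_aleph0] at this
  exact this.trans (mul_le_of_le hℵ₀ hℵ₀ (ciSup_le' hstage))

end Set

open Set

theorem IsGLB.of_isCoinitialFor_of_subset {P : Type*} [Preorder P] {s t : Set P} {a : P}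
    (ht : IsGLB t a) (hts : t ⊆ s) (hst : IsCoinitialFor s t) : IsGLB s a :=
  (isGLB_congr <|
    (lowerBounds_mono_set hts).antisymm (lowerBounds_mono_of_isCoinitialFor hst)).2 ht

section ChainInf

variable {P : Type*} [PartialOrder P]

theorem exists_isGLB_range_of_countable
    (hC : ∀ C : Set P, C.Nonempty → IsChain (· ≤ ·) C → ∃ a, IsGLB C a)
    {ι : Type*} [Countable ι] [Nonempty ι] {d : ι → P}
    (hd : Directed (· ≥ ·) d) : ∃ a, IsGLB (range d) a := by
  have := Encodable.ofCountable ι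
  inhabit ι
  obtain ⟨a, ha⟩ := hC _ (range_nonempty _) hd.sequence_anti.isChain_range
  refine ⟨a, ha.of_isCoinitialFor_of_subset (range_comp_subset_range _ _) ?_⟩
  rintro _ ⟨i, rfl⟩
  exact ⟨_, mem_range_self _, hd.sequence_le i⟩

theorem exists_isGLB_range_of_uncountable
    (hC : ∀ C : Set P, C.Nonempty → IsChain (· ≤ ·) C → ∃ a, IsGLB C a)
    {ι : Type*} [Uncountable ι] {d : ι → P}
    (hd : Directed (· ≥ ·) d)
    (ih : ∀ s : Set ι, #s < #ι → s.Nonempty → Directed (· ≥ ·) (fun i : s => d i) →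
      ∃ a, IsGLB (range fun i : s => d i) a) :
    ∃ a, IsGLB (range d) a := by
  obtain ⟨_, _, hord⟩ := exists_ord_eq_type_lt ι
  choose lb hlb using hd
  let S : ι → Set ι := fun k => image2Closure lb (Iic k)
  have hS_mono : Monotone S := fun k l h => image2Closure_mono (Iic_subset_Iic.2 h)
  have hS_self : ∀ k, k ∈ S k := fun k => subset_image2Closure _ self_mem_Iic
  have hS_cover : ⋃ k, S k = Set.univ :=
    eq_univ_of_forall fun k => mem_iUnion.2 ⟨k, hS_self k⟩
  have hℵ₀ : ℵ₀ < #ι := aleph0_lt_mk_iff.2 ‹_›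
  have hS_lt : ∀ k, #(S k) < #ι := fun k =>
    (mk_image2Closure_le _).trans_lt (max_lt (mk_Iic_lt k hord hℵ₀.le) hℵ₀)
  have hS_dir : ∀ k, Directed (· ≥ ·) (fun i : S k => d i) := fun k i j =>
    ⟨⟨_, image2_mem_image2Closure i.2 j.2⟩, hlb i j⟩
  choose a ha using fun k => ih (S k) (hS_lt k) ⟨k, hS_self k⟩ (hS_dir k)
  simp only [← image_eq_range] at ha
  have ha_anti : Antitone a := fun k l h => (ha k).mono (ha l) (image_mono (hS_mono h))
  obtain ⟨b, hb⟩ := hC _ (range_nonempty a) ha_anti.isChain_range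
  refine ⟨b, ?_⟩
  rwa [← image_univ, ← hS_cover, image_iUnion, ← isGLB_iUnion_iff_of_isGLB ha]

theorem exists_isGLB_range_of_directed
    (hC : ∀ C : Set P, C.Nonempty → IsChain (· ≤ ·) C → ∃ a, IsGLB C a)
    {ι : Type*} [Nonempty ι] {d : ι → P}
    (hd : Directed (· ≥ ·) d) : ∃ a, IsGLB (range d) a := by
  induction h : #ι using WellFoundedLT.induction generalizing ι with
  | _ κ ih =>
  by_cases hι : Countable ι
  · exact exists_isGLB_range_of_countable hC hd
  · have := not_countable_iff.1 hι
    refine exists_isGLB_range_of_uncountable hC hd fun s hs hne hdir => ?_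
    have := hne.to_subtype
    exact ih _ (h ▸ hs) hdir rfl

end ChainInf

theorem downDirected_inf_iff_chain_inf {P : Type*} [PartialOrder P] :
    (∀ D : Set P, D.Nonempty → DirectedOn (· ≥ ·) D → ∃ a, IsGLB D a) ↔
      (∀ C : Set P, C.Nonempty → IsChain (· ≤ ·) C → ∃ a, IsGLB C a) := by
  refine ⟨fun h C hne hC => h C hne (IsChain.directedOn (r := (· ≥ ·)) hC.symm), ?_⟩
  intro hC D hne hD
  have := hne.to_subtype
  simpa using exists_isGLB_range_of_directed hC hD.directed_val
end

section
/- In a V-metric space (E,d) over a complete involutive ordered monoid V, if (E,d) is hyperconvex and an intersection of balls A is equally centered (δ(A) = r(A)), then the diameter δ(A) is inaccessible in V. -/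
/-! Hyperconvexity, applied to the balls cutting out `A` together with the balls `B(a, r)`,
`a ∈ A` (compatible because `δ(A) ≤ r ⊕ r̄`), gives `c ∈ A` with `d a c ≤ r`
for all `a ∈ A`. Then `c` centres `A` with radius `r̄`, so `δ(A) = r(A) ≤ r̄`; since the
diameter satisfies `δ(A) ≤ conj δ(A)`, conjugating gives `δ(A) ≤ r`. -/

namespace VMetric

variable {E V : Type*} [CompleteLattice V]

def ball (d : E → E → V) (x : E) (v : V) : Set E := {y | d x y ≤ v}

def diam (d : E → E → V) (A : Set E) : V := ⨆ x ∈ A, ⨆ y ∈ A, d x y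

/-- The hyperconvexity condition on a family of balls `B(p.1, p.2)`, `p ∈ S`. -/
def Compatible (op : V → V → V) (conj : V → V) (d : E → E → V) (S : Set (E × V)) : Prop :=
  ∀ p ∈ S, ∀ q ∈ S, d p.1 q.1 ≤ op p.2 (conj q.2)

def Hyperconvex (op : V → V → V) (conj : V → V) (d : E → E → V) : Prop :=
  ∀ S : Set (E × V), Compatible op conj d S → (⋂ p ∈ S, ball d p.1 p.2).Nonempty

variable {op : V → V → V} {conj : V → V} {d : E → E → V}

lemma le_diam {A : Set E} {a b : E} (ha : a ∈ A) (hb : b ∈ A) : d a b ≤ diam d A :=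
  le_iSup₂_of_le a ha (le_iSup₂_of_le b hb le_rfl)

lemma diam_le_conj_diam (hconjmono : Monotone conj) (hconjd : ∀ x y, d x y = conj (d y x))
    (A : Set E) : diam d A ≤ conj (diam d A) :=
  iSup₂_le fun x hx => iSup₂_le fun y hy =>
    (hconjd x y).trans_le (hconjmono (le_diam hy hx))

lemma compatible_of_mem_iInter_ball
    (hmono : ∀ u v u' v', u ≤ u' → v ≤ v' → op u v ≤ op u' v')
    (hconjmono : Monotone conj) (htri : ∀ x y z, d x y ≤ op (d x z) (d z y))
    (hconjd : ∀ x y, d x y = conj (d y x)) {S : Set (E × V)} {a : E}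
    (ha : a ∈ ⋂ p ∈ S, ball d p.1 p.2) : Compatible op conj d S := by
  simp only [Set.mem_iInter] at ha
  intro p hp q hq
  calc d p.1 q.1 ≤ op (d p.1 a) (d a q.1) := htri _ _ _
    _ ≤ op p.2 (conj q.2) :=
      hmono _ _ _ _ (ha p hp) ((hconjd a q.1).trans_le (hconjmono (ha q hq)))

lemma compatible_union_image_of_diam_le
    (hneutl : ∀ v, op ⊥ v = v) (hneutr : ∀ v, op v ⊥ = v)
    (hmono : ∀ u v u' v', u ≤ u' → v ≤ v' → op u v ≤ op u' v')
    (hconjmono : Monotone conj) (htri : ∀ x y z, d x y ≤ op (d x z) (d z y))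
    (hconjd : ∀ x y, d x y = conj (d y x)) {S : Set (E × V)} {A : Set E}
    (hS : A = ⋂ p ∈ S, ball d p.1 p.2) (hA : A.Nonempty) {r : V}
    (hr : diam d A ≤ op r (conj r)) :
    Compatible op conj d (S ∪ (fun a => (a, r)) '' A) := by
  obtain ⟨a₀, ha₀⟩ := hA
  have hSc := compatible_of_mem_iInter_ball hmono hconjmono htri hconjd (hS ▸ ha₀)
  have hball : ∀ a ∈ A, ∀ p ∈ S, d p.1 a ≤ p.2 := fun a ha =>
    Set.mem_iInter₂.1 (hS ▸ ha)
  rintro p (hp | ⟨a, ha, rfl⟩) q (hq | ⟨b, hb, rfl⟩)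
  · exact hSc p hp q hq
  · calc d p.1 b ≤ op p.2 ⊥ := (hneutr _).symm ▸ hball b hb p hp
      _ ≤ op p.2 (conj r) := hmono _ _ _ _ le_rfl bot_le
  · calc d a q.1 ≤ op ⊥ (conj q.2) :=
          (hneutl _).symm ▸ (hconjd a q.1).trans_le (hconjmono (hball a ha q hq))
      _ ≤ op r (conj q.2) := hmono _ _ _ _ bot_le le_rfl
  · exact (le_diam ha hb).trans hr

lemma exists_mem_forall_dist_le_of_diam_le (hhyper : Hyperconvex op conj d)
    (hneutl : ∀ v, op ⊥ v = v) (hneutr : ∀ v, op v ⊥ = v)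
    (hmono : ∀ u v u' v', u ≤ u' → v ≤ v' → op u v ≤ op u' v')
    (hconjmono : Monotone conj) (htri : ∀ x y z, d x y ≤ op (d x z) (d z y))
    (hconjd : ∀ x y, d x y = conj (d y x)) {S : Set (E × V)} {A : Set E}
    (hS : A = ⋂ p ∈ S, ball d p.1 p.2) (hA : A.Nonempty) {r : V}
    (hr : diam d A ≤ op r (conj r)) :
    ∃ c ∈ A, ∀ a ∈ A, d a c ≤ r := by
  obtain ⟨c, hc⟩ := hhyper _ <|
    compatible_union_image_of_diam_le hneutl hneutr hmono hconjmono htri hconjd hS hA hr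
  simp only [Set.mem_iInter] at hc
  refine ⟨c, ?_, fun a ha => hc (a, r) (Or.inr ⟨a, ha, rfl⟩)⟩
  rw [hS, Set.mem_iInter₂]
  exact fun p hp => hc p (Or.inl hp)

end VMetric

open VMetric in
theorem equally_centered_in_hyperconvex_inaccessible_general (E V : Type*) [CompleteLattice V]
    (op : V → V → V) (conj : V → V)
    (hneutl : ∀ v, op ⊥ v = v) (hneutr : ∀ v, op v ⊥ = v)
    (hmono : ∀ u v u' v', u ≤ u' → v ≤ v' → op u v ≤ op u' v')
    (hconjmono : ∀ u v, u ≤ v → conj u ≤ conj v)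
    (hconjconj : ∀ v, conj (conj v) = v)
    (d : E → E → V)
    (htri : ∀ x y z, d x y ≤ op (d x z) (d z y))
    (hconjd : ∀ x y, d x y = conj (d y x))
    (hhyper : ∀ S : Set (E × V),
      (∀ p ∈ S, ∀ q ∈ S, d p.1 q.1 ≤ op p.2 (conj q.2)) →
      (⋂ p ∈ S, {y : E | d p.1 y ≤ p.2}).Nonempty)
    (A : Set E)
    (hA : ∃ S : Set (E × V), A = ⋂ p ∈ S, {y : E | d p.1 y ≤ p.2})
    (heq : (⨆ x ∈ A, ⨆ y ∈ A, d x y) = sInf {v : V | ∃ x ∈ A, ∀ y ∈ A, d x y ≤ v}) :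
    ∀ r : V, (⨆ x ∈ A, ⨆ y ∈ A, d x y) ≤ op r (conj r) →
      (⨆ x ∈ A, ⨆ y ∈ A, d x y) ≤ r := by
  intro r hr
  obtain rfl | hne := A.eq_empty_or_nonempty
  · simp
  have hconjmono' : Monotone conj := fun u v => hconjmono u v
  obtain ⟨S, hS⟩ := hA
  obtain ⟨c, hcA, hc⟩ := exists_mem_forall_dist_le_of_diam_le hhyper hneutl hneutr hmono
    hconjmono' htri hconjd hS hne hr
  have hradius : sInf {v : V | ∃ x ∈ A, ∀ y ∈ A, d x y ≤ v} ≤ conj r :=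
    sInf_le ⟨c, hcA, fun y hy => (hconjd c y).trans_le (hconjmono' (hc y hy))⟩
  calc diam d A ≤ conj (diam d A) := diam_le_conj_diam hconjmono' hconjd A
    _ ≤ conj (conj r) := hconjmono' (heq.trans_le hradius)
    _ = r := hconjconj r

theorem equally_centered_in_hyperconvex_inaccessible (E V : Type*) [CompleteLattice V]
    (op : V → V → V) (conj : V → V)
    (hassoc : ∀ u v w, op (op u v) w = op u (op v w))
    (hneutl : ∀ v, op ⊥ v = v) (hneutr : ∀ v, op v ⊥ = v)
    (hmono : ∀ u v u' v', u ≤ u' → v ≤ v' → op u v ≤ op u' v')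
    (hconjmono : ∀ u v, u ≤ v → conj u ≤ conj v)
    (hconjconj : ∀ v, conj (conj v) = v)
    (hconjop : ∀ u v, conj (op u v) = op (conj v) (conj u))
    (d : E → E → V)
    (hd0 : ∀ x y, d x y ≤ ⊥ ↔ x = y)
    (htri : ∀ x y z, d x y ≤ op (d x z) (d z y))
    (hconjd : ∀ x y, d x y = conj (d y x))
    (hhyper : ∀ S : Set (E × V),
      (∀ p ∈ S, ∀ q ∈ S, d p.1 q.1 ≤ op p.2 (conj q.2)) →
      (⋂ p ∈ S, {y : E | d p.1 y ≤ p.2}).Nonempty)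
    (A : Set E)
    (hA : ∃ S : Set (E × V), A = ⋂ p ∈ S, {y : E | d p.1 y ≤ p.2})
    (heq : (⨆ x ∈ A, ⨆ y ∈ A, d x y) = sInf {v : V | ∃ x ∈ A, ∀ y ∈ A, d x y ≤ v}) :
    ∀ r : V, (⨆ x ∈ A, ⨆ y ∈ A, d x y) ≤ op r (conj r) →
      (⨆ x ∈ A, ⨆ y ∈ A, d x y) ≤ r :=
  equally_centered_in_hyperconvex_inaccessible_general E V op conj hneutl hneutr hmono hconjmono
    hconjconj d htri hconjd hhyper A hA heq
end

section
/- Let Λ = {+,-} and order the set Λ* of finite words over Λ by the subword (subsequence) ordering. Every element v of the MacNeille completion of (Λ*, ≤) of the form ↑u for a nonempty word u is accessible: there exists a finitely generated upper set r such that ↑u ⊄ r but every word in the concatenation r ⊕ r̄ lies above some element of ↑u, where r̄ is obtained by reversing words and swapping + and -, and X ⊕ Y := the upward closure of {xy : x ∈ X, y ∈ Y}. Concretely: for every nonempty word u over {+,-} there exists a word u' with u ≰ u' (subword order) and u ≤ u'·conj(u'), where conj(u') reverses u' and swaps its letters. -/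
/-!
Write `u = v·b`. The witness is `u' = (¬b)·v`: it contains one letter `b` fewer than `u`,
so `u ≰ u'`, while `u'·conj(u') = (¬b)·v·conj(v)·b` visibly contains `v·b`.
-/

theorem List.not_sublist_append_singleton_cons {α : Type*} [DecidableEq α] {a b : α}
    (hab : a ≠ b) (v : List α) : ¬ (v ++ [b]).Sublist (a :: v) := fun h => by
  have := h.count_le b
  simp [hab] at this

theorem List.append_singleton_sublist_cons_append {α : Type*} (a b : α) (v w : List α) :
    (v ++ [b]).Sublist (a :: v ++ (w ++ [b])) :=
  (List.sublist_cons_self a v).append (List.sublist_append_right w [b])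

theorem accessible_words (u : List Bool) (hu : u ≠ []) :
    ∃ u' : List Bool, ¬ u.Sublist u' ∧
      u.Sublist (u' ++ (u'.reverse.map (fun b => !b))) := by
  obtain ⟨v, b, rfl⟩ := (List.eq_nil_or_concat u).resolve_left hu
  rw [List.concat_eq_append]
  refine ⟨(!b) :: v, List.not_sublist_append_singleton_cons (Bool.not_ne_self b) v, ?_⟩
  rw [List.reverse_cons, List.map_append, List.map_singleton, Bool.not_not]
  exact List.append_singleton_sublist_cons_append (!b) b v _
end
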